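/- Let X, Y₁, …, Y_N be n×n matrices over a commutative ring and let m₁, …, m_N be nonnegative integers with m₁ + ⋯ + m_N ≤ n. Then Z_{n−Σᵢmᵢ, m₁,…,m_N}(X, X·Y₁, …, X·Y_N) = det(X) · Z_{m₁,…,m_N}(Y₁,…,Y_N). In particular, for N = 1 and m₁ = n this reduces to det(X·Y) = det(X)·det(Y). -/

import Mathlib

/-!
Substitute `α₀ ↦ t` and `αᵢ ↦ t βᵢ`. The pencil `I + α₀ X + Σᵢ αᵢ X Yᵢ` becomes
`I + t X (I + Σᵢ βᵢ Yᵢ)`, whose determinant has `t ^ n` coefficient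
`det X · det (I + Σᵢ βᵢ Yᵢ)`. On the other side, the coefficient of `t ^ n β^m` after the
substitution is the coefficient of `α₀ ^ (n - |m|) α^m` before it, because the substitution
multiplies every monomial of total degree `d` by `t ^ d`.
-/

open Matrix

/-- The generalized matrix invariant `Z_{m₁,…,m_N}(X₁,…,X_N)`: the coefficient of the
monomial `α₁^{m₁} ⋯ α_N^{m_N}` in the polynomial `det(I + Σᵢ αᵢ Xᵢ)`. -/
noncomputable def genZ {R : Type*} [CommRing R] {n N : ℕ}
    (Xs : Fin N → Matrix (Fin n) (Fin n) R) (m : Fin N → ℕ) : R :=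
  MvPolynomial.coeff (Finsupp.equivFunOnFinite.symm m)
    (Matrix.det (1 + ∑ i : Fin N,
      (MvPolynomial.X i : MvPolynomial (Fin N) R) • (Xs i).map MvPolynomial.C))

theorem Matrix.coeff_det_one_add_X_smul_card {R n : Type*} [CommRing R] [Fintype n]
    [DecidableEq n] (M : Matrix n n R) :
    (det (1 + (Polynomial.X : Polynomial R) • M.map Polynomial.C)).coeff (Fintype.card n)
      = M.det := by
  rw [coeff_det_one_add_X_smul_eq_sum_minors, ← Finset.card_univ, Finset.powersetCard_self,
    Finset.sum_singleton]
  exact det_submatrix_equiv_self (Equiv.subtypeUnivEquiv Finset.mem_univ) M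

namespace Finsupp

theorem degree_eq_zero_add_degree_tail {N : ℕ} (d : Fin (N + 1) →₀ ℕ) :
    d.degree = d 0 + d.tail.degree := by
  simp only [degree_eq_sum, Fin.sum_univ_succ, tail_apply]

theorem eq_cons_sub_degree_iff {N n : ℕ} {d : Fin (N + 1) →₀ ℕ} {m : Fin N →₀ ℕ}
    (h : m.degree ≤ n) : d = cons (n - m.degree) m ↔ d.degree = n ∧ d.tail = m := by
  constructor
  · rintro rfl
    rw [degree_eq_zero_add_degree_tail, tail_cons, cons_zero]
    exact ⟨Nat.sub_add_cancel h, rfl⟩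
  · rintro ⟨hd, rfl⟩
    rw [degree_eq_zero_add_degree_tail] at hd
    rw [← hd, Nat.add_sub_cancel, cons_tail]

end Finsupp

namespace MvPolynomial

variable {R : Type*} [CommRing R]

noncomputable def pencil {σ n : Type*} [Fintype σ] [Fintype n] [DecidableEq n]
    (Xs : σ → Matrix n n R) : Matrix n n (MvPolynomial σ R) :=
  1 + ∑ i, (X i : MvPolynomial σ R) • (Xs i).map C

theorem map_pencil {σ n S : Type*} [Fintype σ] [Fintype n] [DecidableEq n]
    [CommRing S] [Algebra R S] (f : MvPolynomial σ R →ₐ[R] S) (Xs : σ → Matrix n n R) :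
    (pencil Xs).map f = 1 + ∑ i, f (X i) • (Xs i).map (algebraMap R S) := by
  ext k l
  simp [pencil, Matrix.one_apply, apply_ite f, Matrix.sum_apply]

variable {N : ℕ}

noncomputable def coneSubst (R : Type*) [CommRing R] (N : ℕ) :
    MvPolynomial (Fin (N + 1)) R →ₐ[R] Polynomial (MvPolynomial (Fin N) R) :=
  aeval (Fin.cons Polynomial.X fun i => Polynomial.C (X i) * Polynomial.X)

theorem coneSubst_monomial (d : Fin (N + 1) →₀ ℕ) (a : R) :
    coneSubst R N (monomial d a)
      = Polynomial.C (monomial d.tail a) * Polynomial.X ^ d.degree := by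
  rw [coneSubst, aeval_monomial, Finsupp.prod_fintype _ _ fun _ => pow_zero _,
    Fin.prod_univ_succ, monomial_eq, Finsupp.prod_fintype _ _ fun _ => pow_zero _,
    Finsupp.degree_eq_zero_add_degree_tail, Finsupp.degree_eq_sum]
  simp only [Fin.cons_zero, Fin.cons_succ, mul_pow, Finset.prod_mul_distrib,
    Finset.prod_pow_eq_pow_sum, Finsupp.tail_apply, map_mul, map_prod, map_pow]
  rw [Polynomial.algebraMap_apply, algebraMap_eq, pow_add]
  ring

theorem coeff_coeff_coneSubst {n : ℕ} {m : Fin N →₀ ℕ} (h : m.degree ≤ n)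
    (p : MvPolynomial (Fin (N + 1)) R) :
    coeff m ((coneSubst R N p).coeff n) = coeff (Finsupp.cons (n - m.degree) m) p := by
  induction p using induction_on' with
  | monomial d a =>
    rw [coneSubst_monomial, Polynomial.coeff_C_mul_X_pow, apply_ite (coeff m), coeff_zero,
      coeff_monomial, coeff_monomial, if_congr (Finsupp.eq_cons_sub_degree_iff h) rfl rfl,
      ite_and]
    simp only [eq_comm]
  | add p q hp hq => simp only [map_add, Polynomial.coeff_add, coeff_add, hp, hq]

theorem coneSubst_pencil_cons {n : ℕ} (A : Matrix (Fin n) (Fin n) R)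
    (Ys : Fin N → Matrix (Fin n) (Fin n) R) :
    (pencil (Fin.cons A fun j => A * Ys j)).map (coneSubst R N)
      = 1 + (Polynomial.X : Polynomial (MvPolynomial (Fin N) R)) •
          (A.map C * pencil Ys).map Polynomial.C := by
  rw [map_pencil, Fin.sum_univ_succ]
  refine Matrix.ext fun k l => ?_
  simp only [coneSubst, aeval_X, Fin.cons_zero, Fin.cons_succ, Matrix.map_mul,
    Matrix.add_apply, Matrix.smul_apply, map_apply, Polynomial.algebraMap_apply, algebraMap_eq,
    smul_eq_mul, Polynomial.X_mul_C, Matrix.sum_apply, Matrix.mul_apply, Finset.mul_sum, pencil,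
    mul_one, Algebra.mul_smul_comm, map_add, map_sum, map_mul, mul_add]
  ring_nf

end MvPolynomial

open MvPolynomial in
/-- determinant factorization. For `n x n` matrices `X, Y1, ..., YN` over a
commutative ring and `m1 + ... + mN <= n`,
`Z_{n - sum mi, m1,...,mN}(X, X*Y1, ..., X*YN) = det(X) * Z_{m1,...,mN}(Y1,...,YN)`;
in particular (`N = 1`, `m1 = n`) this reduces to `det(X*Y) = det(X) * det(Y)`. -/
theorem genZ_determinant_factorization
    {R : Type*} [CommRing R] {n N : ℕ}
    (X : Matrix (Fin n) (Fin n) R) (Ys : Fin N → Matrix (Fin n) (Fin n) R)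
    (m : Fin N → ℕ) (h : ∑ i : Fin N, m i ≤ n) :
    genZ (Fin.cons X (fun i => X * Ys i)) (Fin.cons (n - ∑ i : Fin N, m i) m)
        = X.det * genZ Ys m ∧
    ∀ (X' Y' : Matrix (Fin n) (Fin n) R), (X' * Y').det = X'.det * Y'.det := by
  refine ⟨?_, fun X' Y' => det_mul X' Y'⟩
  set m' := Finsupp.equivFunOnFinite.symm m
  have hm : m'.degree = ∑ i, m i := Finsupp.degree_eq_sum m'
  calc genZ (Fin.cons X (fun i => X * Ys i)) (Fin.cons (n - ∑ i, m i) m)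
      = coeff (Finsupp.cons (n - m'.degree) m') (pencil (Fin.cons X fun i => X * Ys i)).det := by
        rw [hm]; rfl
    _ = coeff m' ((coneSubst R N (pencil (Fin.cons X fun i => X * Ys i)).det).coeff n) :=
        (coeff_coeff_coneSubst (hm ▸ h) _).symm
    _ = coeff m' (X.map C * pencil Ys).det := by
        have htop := coeff_det_one_add_X_smul_card (X.map C * pencil Ys)
        rw [Fintype.card_fin] at htop
        rw [AlgHom.map_det, AlgHom.mapMatrix_apply, coneSubst_pencil_cons, htop]
    _ = X.det * genZ Ys m := by
        rw [det_mul, ← RingHom.mapMatrix_apply, ← RingHom.map_det, coeff_C_mul]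
        rfl
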